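/- arXiv:1510.08705 — 2 statements merged into one kernel-verified Lean document; each statement's English description precedes it below -/
import Mathlib

section
/- The quadratic map σ₁ : ℙ² ⇢ ℙ², [x:y:z] ↦ [y²+z² : xy : xz], is a birational involution of ℙ² defined over ℝ: σ₁ ∘ σ₁ is the identity on the open set where it is defined, and σ₁ maps the pencil of conics through p₁=[1:i:0], p̄₁=[1:−i:0], p₂=[0:1:i], p̄₂=[0:1:−i] to itself; explicitly, with π∘([x:y:z]) = [y²+(x+z)² : y²+(x−z)²], one has π∘(σ₁([x:y:z])) = π∘([x:y:z]) up to the induced automorphism of ℙ¹, for all points where both sides are defined. -/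
open Matrix

/-- The quadratic map `σ₁ : [x:y:z] ⇢ [y²+z² : xy : xz]` on the level of
representative vectors. -/
def sigma1 (v : Fin 3 → ℝ) : Fin 3 → ℝ := ![v 1 ^ 2 + v 2 ^ 2, v 0 * v 1, v 0 * v 2]

/-- The conic-pencil fibration `π∘ : [x:y:z] ⇢ [y²+(x+z)² : y²+(x−z)²]` on the level
of representative vectors. -/
def piCirc (v : Fin 3 → ℝ) : Fin 2 → ℝ := ![v 1 ^ 2 + (v 0 + v 2) ^ 2, v 1 ^ 2 + (v 0 - v 2) ^ 2]

/-- `σ₁` is a real birational involution of `ℙ²`: applying it twice gives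
`x(y²+z²)` times the identity, and it preserves the pencil of conics through
`p₁, p̄₁, p₂, p̄₂` up to an automorphism `A ∈ PGL₂(ℝ)` of `ℙ¹`. -/
theorem sigma1_involution_preserves_pencil :
    (∀ v : Fin 3 → ℝ, sigma1 (sigma1 v) = (v 0 * (v 1 ^ 2 + v 2 ^ 2)) • v) ∧
    ∃ A : GL (Fin 2) ℝ, ∀ v : Fin 3 → ℝ, ¬(v 1 = 0 ∧ v 2 = 0) →
      ∃ c : ℝ, c ≠ 0 ∧ piCirc (sigma1 v) = c • (A : Matrix (Fin 2) (Fin 2) ℝ).mulVec (piCirc v) := by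
  constructor
  · intro v
    funext i
    fin_cases i <;> simp [sigma1] <;> ring
  · refine ⟨1, fun v hv => ⟨v 1 ^ 2 + v 2 ^ 2, ?_, ?_⟩⟩
    · intro h
      have h1 : v 1 = 0 := by nlinarith [sq_nonneg (v 1), sq_nonneg (v 2)]
      have h2 : v 2 = 0 := by nlinarith [sq_nonneg (v 1), sq_nonneg (v 2)]
      exact hv ⟨h1, h2⟩
    · funext i
      fin_cases i <;>
        simp [piCirc, sigma1, Units.val_one, one_mulVec] <;> ring
end

section
/- Let q ∈ ℙ²(ℝ) be a real point such that q, p₂=[0:1:i], p̄₂=[0:1:−i] are not collinear and q, p₁=[1:i:0], p̄₁=[1:−i:0] are not collinear (as points of ℙ²(ℂ)). Then there exists a real projective transformation α ∈ PGL₃(ℝ) fixing p₁ and p̄₁ and sending q to [0:0:1]. -/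
open Matrix Complex

/-- If a real point `q ∈ ℙ²(ℝ)` is not collinear with `p₂ = [0:1:i], p̄₂ = [0:1:−i]`
and not collinear with `p₁ = [1:i:0], p̄₁ = [1:−i:0]`, then there is a real projective
transformation fixing `p₁` and `p̄₁` and sending `q` to `[0:0:1]`. -/
theorem exists_real_transformation_fixing_p1 (q : Fin 3 → ℝ) (hq : q ≠ 0)
    (hcol2 : Matrix.det (Matrix.of ![(fun i => (q i : ℂ)), ![0, 1, I], ![0, 1, -I]]) ≠ 0)
    (hcol1 : Matrix.det (Matrix.of ![(fun i => (q i : ℂ)), ![1, I, 0], ![1, -I, 0]]) ≠ 0) :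
    ∃ A : Matrix (Fin 3) (Fin 3) ℝ, IsUnit A ∧
      (∃ c : ℂ, c ≠ 0 ∧ (A.map (fun r => (r : ℂ))).mulVec ![1, I, 0] = c • ![1, I, 0]) ∧
      (∃ c' : ℂ, c' ≠ 0 ∧ (A.map (fun r => (r : ℂ))).mulVec ![1, -I, 0] = c' • ![1, -I, 0]) ∧
      (∃ d : ℝ, d ≠ 0 ∧ A.mulVec q = d • ![0, 0, 1]) := by
  have hq2 : q 2 ≠ 0 := by
    intro h
    apply hcol1
    rw [Matrix.det_fin_three]
    simp [Matrix.of_apply, Matrix.vecHead, Matrix.vecTail, h]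
  refine ⟨!![1, 0, -(q 0)/(q 2); 0, 1, -(q 1)/(q 2); 0, 0, 1], ?_, ?_, ?_, ?_⟩
  · rw [Matrix.isUnit_iff_isUnit_det, Matrix.det_fin_three]
    norm_num [Matrix.vecHead, Matrix.vecTail, Matrix.cons_val_two]
  · refine ⟨1, one_ne_zero, ?_⟩
    funext i
    fin_cases i <;>
      simp [Matrix.mulVec, dotProduct, Fin.sum_univ_three, Matrix.map_apply]
  · refine ⟨1, one_ne_zero, ?_⟩
    funext i
    fin_cases i <;>
      simp [Matrix.mulVec, dotProduct, Fin.sum_univ_three, Matrix.map_apply]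
  · refine ⟨q 2, hq2, ?_⟩
    funext i
    fin_cases i <;>
      simp [Matrix.mulVec, dotProduct, Fin.sum_univ_three, Matrix.vecHead,
        Matrix.vecTail] <;>
      field_simp <;> ring
end
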